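/- In the Gaussian regression model with true parameter F₀ and uniform bound sup_F ‖G(F)‖_∞ ≤ S, the second moment of the log-likelihood ratio satisfies E_{F₀}[(log(p_{F₀}(Y,X)/p_F(Y,X)))²] ≤ (2(S² + σ²)/σ⁴) ‖G(F₀) − G(F)‖²_{L²(D,μ)}. -/

import Mathlib

/-!
Writing the observation as `y = g₀(x) + σw` and `Δ = g₀(x) - g(x)`, the log-likelihood ratio is the
affine function `Δ²/(2σ²) + (Δ/σ) w` of the noise `w ∼ N(0,1)`, so its second moment is exactly
`Δ⁴/(4σ⁴) + Δ²/σ²`. Since `|Δ| ≤ 2S`, this is at most `(S² + σ²) Δ²/σ⁴`; integrating over `x ∼ μ`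
gives the claim, with a factor `2` to spare.
-/

open MeasureTheory Real ProbabilityTheory
open scoped NNReal

/-- The Gaussian regression density `y ↦ (2πσ²)^{-1/2} exp(-(y-m)²/(2σ²))`. -/
noncomputable def pdens (σ m y : ℝ) : ℝ :=
  (2 * Real.pi * σ ^ 2) ^ (-(1 / 2 : ℝ)) * Real.exp (-(y - m) ^ 2 / (2 * σ ^ 2))

lemma integral_sq_gaussianReal (m : ℝ) (v : ℝ≥0) :
    ∫ x, x ^ 2 ∂gaussianReal m v = m ^ 2 + v := by
  have h := variance_eq_sub (memLp_id_gaussianReal (μ := m) (v := v) 2)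
  simp only [variance_id_gaussianReal, id_eq, Pi.pow_apply, integral_id_gaussianReal] at h
  linarith

lemma integral_affine_sq_gaussianReal (a b m : ℝ) (v : ℝ≥0) :
    ∫ x, (a + b * x) ^ 2 ∂gaussianReal m v = (a + b * m) ^ 2 + b ^ 2 * v := by
  have hx : Integrable (fun x : ℝ ↦ x) (gaussianReal m v) :=
    (memLp_id_gaussianReal 1).integrable le_rfl
  have hx2 : Integrable (fun x : ℝ ↦ x ^ 2) (gaussianReal m v) :=
    (memLp_id_gaussianReal 2).integrable_sq
  have hexpand : (fun x : ℝ ↦ (a + b * x) ^ 2)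
      = fun x ↦ a ^ 2 + ((2 * a * b) * x + b ^ 2 * x ^ 2) := by
    ext x; ring
  have hlin : Integrable (fun x ↦ (2 * a * b) * x + b ^ 2 * x ^ 2) (gaussianReal m v) :=
    (hx.const_mul _).add (hx2.const_mul _)
  rw [hexpand, integral_add (integrable_const _) hlin,
    integral_add (hx.const_mul _) (hx2.const_mul _), integral_const_mul, integral_const_mul,
    integral_sq_gaussianReal, integral_id_gaussianReal, integral_const, probReal_univ]
  simp only [smul_eq_mul, one_mul]
  ring

lemma log_pdens_div {σ : ℝ} (hσ : σ ≠ 0) (m₀ m y : ℝ) :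
    Real.log (pdens σ m₀ y / pdens σ m y) = ((y - m) ^ 2 - (y - m₀) ^ 2) / (2 * σ ^ 2) := by
  have hC : (2 * π * σ ^ 2) ^ (-(1 / 2 : ℝ)) ≠ 0 := (rpow_pos_of_pos (by positivity) _).ne'
  rw [pdens, pdens, mul_div_mul_left _ _ hC, ← exp_sub, log_exp]
  ring

lemma log_pdens_div_of_shift {σ : ℝ} (hσ : σ ≠ 0) (m₀ m w : ℝ) :
    Real.log (pdens σ m₀ (m₀ + σ * w) / pdens σ m (m₀ + σ * w))
      = (m₀ - m) ^ 2 / (2 * σ ^ 2) + (m₀ - m) / σ * w := by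
  rw [log_pdens_div hσ]
  field_simp
  ring

lemma integral_sq_log_pdens_div {σ : ℝ} (hσ : σ ≠ 0) (m₀ m : ℝ) :
    ∫ w, (Real.log (pdens σ m₀ (m₀ + σ * w) / pdens σ m (m₀ + σ * w))) ^ 2 ∂gaussianReal 0 1
      = (m₀ - m) ^ 4 / (4 * σ ^ 4) + (m₀ - m) ^ 2 / σ ^ 2 := by
  simp only [log_pdens_div_of_shift hσ, integral_affine_sq_gaussianReal, NNReal.coe_one]
  field_simp
  ring

lemma sq_sub_le_of_abs_le {a b S : ℝ} (ha : |a| ≤ S) (hb : |b| ≤ S) : (a - b) ^ 2 ≤ 4 * S ^ 2 := by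
  have h : |a - b| ≤ 2 * S := (abs_sub a b).trans (by linarith)
  nlinarith [abs_nonneg (a - b), sq_abs (a - b)]

lemma integral_sq_log_pdens_div_le {σ S m₀ m : ℝ} (hσ : σ ≠ 0) (hm₀ : |m₀| ≤ S) (hm : |m| ≤ S) :
    ∫ w, (Real.log (pdens σ m₀ (m₀ + σ * w) / pdens σ m (m₀ + σ * w))) ^ 2 ∂gaussianReal 0 1
      ≤ (S ^ 2 + σ ^ 2) / σ ^ 4 * (m₀ - m) ^ 2 := by
  have hΔ : (m₀ - m) ^ 2 / 4 ≤ S ^ 2 := by linarith [sq_sub_le_of_abs_le hm₀ hm]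
  calc _ = ((m₀ - m) ^ 2 / 4 * (m₀ - m) ^ 2 + σ ^ 2 * (m₀ - m) ^ 2) / σ ^ 4 := by
        rw [integral_sq_log_pdens_div hσ]
        field_simp
    _ ≤ (S ^ 2 * (m₀ - m) ^ 2 + σ ^ 2 * (m₀ - m) ^ 2) / σ ^ 4 := by gcongr
    _ = _ := by ring

/-- In the Gaussian regression model `Y = g₀(X) + σ W`, `X ∼ μ`, `W ∼ N(0,1)`
independent, with uniformly bounded regression functions, the second moment of
the log-likelihood ratio is at most `(2(S²+σ²)/σ⁴) ‖g₀ - g‖²_{L²(D,μ)}`. -/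
theorem kl_second_moment_le {D : Type*} [MeasurableSpace D] (μ : Measure D)
    [IsProbabilityMeasure μ] (σ S : ℝ) (hσ : 0 < σ)
    (g₀ g : D → ℝ) (hg₀ : Measurable g₀) (hg : Measurable g)
    (hb₀ : ∀ x, |g₀ x| ≤ S) (hb : ∀ x, |g x| ≤ S) :
    ∫ x, (∫ w, (Real.log
        (pdens σ (g₀ x) (g₀ x + σ * w) / pdens σ (g x) (g₀ x + σ * w))) ^ 2
        ∂(gaussianReal 0 1)) ∂μ
      ≤ (2 * (S ^ 2 + σ ^ 2) / σ ^ 4) * ∫ x, (g₀ x - g x) ^ 2 ∂μ := by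
  have hΔ : Integrable (fun x ↦ (g₀ x - g x) ^ 2) μ := by
    refine Integrable.of_bound ((hg₀.sub hg).pow_const 2).aestronglyMeasurable (4 * S ^ 2)
      (ae_of_all _ fun x ↦ ?_)
    rw [norm_pow, norm_eq_abs, sq_abs]
    exact sq_sub_le_of_abs_le (hb₀ x) (hb x)
  calc _ ≤ ∫ x, (S ^ 2 + σ ^ 2) / σ ^ 4 * (g₀ x - g x) ^ 2 ∂μ :=
        integral_mono_of_nonneg (ae_of_all _ fun x ↦ integral_nonneg fun w ↦ sq_nonneg _)
          (hΔ.const_mul _) (ae_of_all _ fun x ↦ integral_sq_log_pdens_div_le hσ.ne' (hb₀ x) (hb x))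
    _ = (S ^ 2 + σ ^ 2) / σ ^ 4 * ∫ x, (g₀ x - g x) ^ 2 ∂μ := integral_const_mul _ _
    _ ≤ _ := by
      refine mul_le_mul_of_nonneg_right ?_ (integral_nonneg fun x ↦ sq_nonneg _)
      exact div_le_div_of_nonneg_right (by nlinarith [sq_nonneg S, sq_nonneg σ]) (by positivity)
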